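/- arXiv:2506.10724 — 3 statements merged into one kernel-verified Lean document; each statement's English description precedes it below -/
import Mathlib

section
/- Let k > 0, r > 1, and set θ = (r − 1)/(r(1 + k)). Let X be a real random variable distributed as Gamma(k, θ), and let ε be a square-integrable real random variable independent of X with E[ε] = 1 and Var(ε) = v. If the variance-equilibrium condition E[(r·X·(1−X)·ε)²] − (kθ)² = kθ² holds, then r satisfies the quadratic equation (k + 3)·r² − (4k + 8)·r + (3k + 5 + (v/(v + 1))·(k + 1)²) = 0. -/
/-!
Multiplying the Gamma(a, b) density (rate b) by xⁿ gives a(a+1)⋯(a+n-1)/bⁿ times the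
Gamma(a+n, b) density, so the moments of X are rising factorials divided by powers of the rate
and E[(X(1-X))²] is explicit. Independence splits E[(rX(1-X)ε)²] into E[(rX(1-X))²]·E[ε²],
with E[ε²] = v + 1. After cancelling kθ²(k+1), the equilibrium condition reads
r²(v+1)(1 - 2(k+2)θ + (k+2)(k+3)θ²) = 1, and substituting rθ(1+k) = r - 1 gives the quadratic.
-/

open MeasureTheory ProbabilityTheory Real

namespace Real

theorem Gamma_add_nat_eq_ascPochhammer_mul {a : ℝ} (ha : 0 < a) (n : ℕ) :
    Gamma (a + n) = (ascPochhammer ℝ n).eval a * Gamma a := by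
  induction n with
  | zero => simp
  | succ n ih =>
    rw [Nat.cast_succ, ← add_assoc, Gamma_add_one (by positivity), ih, ascPochhammer_succ_eval]
    ring

end Real

namespace ProbabilityTheory

variable {a b : ℝ}

lemma measurable_gammaPDF : Measurable (gammaPDF a b) :=
  (measurable_gammaPDFReal a b).ennreal_ofReal

lemma toReal_gammaPDF (ha : 0 < a) (hb : 0 < b) (x : ℝ) :
    (gammaPDF a b x).toReal = gammaPDFReal a b x :=
  ENNReal.toReal_ofReal (gammaPDFReal_nonneg ha hb x)

lemma integral_gammaMeasure (ha : 0 < a) (hb : 0 < b) (f : ℝ → ℝ) :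
    ∫ x, f x ∂gammaMeasure a b = ∫ x, gammaPDFReal a b x * f x := by
  rw [gammaMeasure, integral_withDensity_eq_integral_toReal_smul measurable_gammaPDF
    (ae_of_all _ fun _ => ENNReal.ofReal_lt_top)]
  simp [toReal_gammaPDF ha hb]

lemma integrable_gammaMeasure_iff (ha : 0 < a) (hb : 0 < b) {f : ℝ → ℝ} :
    Integrable f (gammaMeasure a b) ↔ Integrable (fun x => gammaPDFReal a b x * f x) := by
  rw [gammaMeasure, integrable_withDensity_iff_integrable_smul' measurable_gammaPDF
    (ae_of_all _ fun _ => ENNReal.ofReal_lt_top)]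
  simp [toReal_gammaPDF ha hb]

lemma gammaPDFReal_mul_pow (ha : 0 < a) (hb : 0 < b) (n : ℕ) (x : ℝ) :
    gammaPDFReal a b x * x ^ n =
      (ascPochhammer ℝ n).eval a / b ^ n * gammaPDFReal (a + n) b x := by
  rcases n.eq_zero_or_pos with rfl | hn
  · simp
  unfold gammaPDFReal
  split_ifs with hx
  · have hΓ := Gamma_pos_of_pos ha
    have hP : 0 < (ascPochhammer ℝ n).eval a := ascPochhammer_pos n a ha
    rw [Gamma_add_nat_eq_ascPochhammer_mul ha, rpow_add_natCast hb.ne',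
      show a + n - 1 = a - 1 + n by ring,
      rpow_add_natCast' hx (ne_of_gt (by linarith [show (1 : ℝ) ≤ n from mod_cast hn]))]
    field_simp
  · simp

lemma integrable_pow_gammaMeasure (ha : 0 < a) (hb : 0 < b) (n : ℕ) :
    Integrable (fun x => x ^ n) (gammaMeasure a b) := by
  have := isProbabilityMeasure_gammaMeasure (by positivity : 0 < a + n) hb
  have hpdf : Integrable (gammaPDFReal (a + n) b) := by
    simpa using (integrable_gammaMeasure_iff (by positivity) hb).1 (integrable_const (1 : ℝ))
  rw [integrable_gammaMeasure_iff ha hb]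
  simpa only [gammaPDFReal_mul_pow ha hb] using hpdf.const_mul _

lemma integral_pow_gammaMeasure (ha : 0 < a) (hb : 0 < b) (n : ℕ) :
    ∫ x, x ^ n ∂gammaMeasure a b = (ascPochhammer ℝ n).eval a / b ^ n := by
  have := isProbabilityMeasure_gammaMeasure (by positivity : 0 < a + n) hb
  have hpdf : ∫ x, gammaPDFReal (a + n) b x = 1 := by
    simpa using (integral_gammaMeasure (a := a + n) (by positivity) hb fun _ => (1 : ℝ)).symm
  simp only [integral_gammaMeasure ha hb, gammaPDFReal_mul_pow ha hb, integral_const_mul, hpdf,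
    mul_one]

lemma integral_sq_mul_one_sub_gammaMeasure (ha : 0 < a) (hb : 0 < b) :
    ∫ x, (x * (1 - x)) ^ 2 ∂gammaMeasure a b =
      a * (a + 1) / b ^ 2 * (1 - 2 * (a + 2) / b + (a + 2) * (a + 3) / b ^ 2) := by
  have hexp : (fun x : ℝ => (x * (1 - x)) ^ 2) = fun x => x ^ 2 - 2 * x ^ 3 + x ^ 4 := by
    funext x; ring
  have hm := integrable_pow_gammaMeasure ha hb
  have hm23 : Integrable (fun x : ℝ => x ^ 2 - 2 * x ^ 3) (gammaMeasure a b) :=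
    (hm 2).sub ((hm 3).const_mul 2)
  rw [hexp, integral_add hm23 (hm 4), integral_sub (hm 2) ((hm 3).const_mul 2),
    integral_const_mul]
  simp only [integral_pow_gammaMeasure ha hb, ascPochhammer_succ_eval, ascPochhammer_zero,
    Polynomial.eval_one]
  field_simp
  ring

end ProbabilityTheory

lemma logistic_equilibrium_quadratic {k r θ v : ℝ} (hk : 0 < k) (hr : 0 < r) (hv : 0 < v + 1)
    (hθ : θ = (r - 1) / (r * (1 + k)))
    (h : r ^ 2 * (1 - 2 * (k + 2) * θ + (k + 2) * (k + 3) * θ ^ 2) * (v + 1) = 1) :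
    (k + 3) * r ^ 2 - (4 * k + 8) * r + (3 * k + 5 + (v / (v + 1)) * (k + 1) ^ 2) = 0 := by
  subst hθ
  field_simp at h ⊢
  linear_combination h

theorem stmt5_general {Ω : Type*} {mΩ : MeasurableSpace Ω} (μ : Measure Ω) [IsProbabilityMeasure μ]
    (k r θ v : ℝ) (hk : 0 < k) (hr : 1 < r) (hθ : θ = (r - 1) / (r * (1 + k)))
    (X ε : Ω → ℝ)
    (hX : Measure.map X μ = gammaMeasure k θ⁻¹)
    (hε : MemLp ε 2 μ) (hindep : IndepFun ε X μ)
    (hεmean : ∫ ω, ε ω ∂μ = 1) (hεvar : variance ε μ = v)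
    (heq : (∫ ω, (r * X ω * (1 - X ω) * ε ω) ^ 2 ∂μ) - (k * θ) ^ 2 = k * θ ^ 2) :
    (k + 3) * r ^ 2 - (4 * k + 8) * r + (3 * k + 5 + (v / (v + 1)) * (k + 1) ^ 2) = 0 := by
  have hθpos : 0 < θ := hθ ▸ div_pos (by linarith) (mul_pos (by linarith) (by linarith))
  have hb : 0 < θ⁻¹ := inv_pos.2 hθpos
  have hXm : AEMeasurable X μ := by
    have := isProbabilityMeasure_gammaMeasure hk hb
    exact .of_map_ne_zero (hX ▸ IsProbabilityMeasure.ne_zero _)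
  have hsplit : ∫ ω, (r * X ω * (1 - X ω) * ε ω) ^ 2 ∂μ
      = (∫ ω, (r * X ω * (1 - X ω)) ^ 2 ∂μ) * ∫ ω, ε ω ^ 2 ∂μ := by
    simp_rw [mul_pow _ (ε _)]
    exact hindep.symm.integral_fun_comp_mul_comp (f := fun x => (r * x * (1 - x)) ^ 2)
      (g := fun e => e ^ 2) hXm hε.aestronglyMeasurable.aemeasurable
      (by fun_prop) (by fun_prop)
  have hlogistic : ∫ ω, (r * X ω * (1 - X ω)) ^ 2 ∂μ
      = r ^ 2 * (k * (k + 1) * θ ^ 2 * (1 - 2 * (k + 2) * θ + (k + 2) * (k + 3) * θ ^ 2)) := by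
    rw [← integral_map (f := fun x => (r * x * (1 - x)) ^ 2) hXm (by fun_prop), hX]
    simp_rw [mul_assoc r, mul_pow r]
    rw [integral_const_mul, integral_sq_mul_one_sub_gammaMeasure hk hb]
    field_simp
  have hε2 : ∫ ω, ε ω ^ 2 ∂μ = v + 1 := by
    have := variance_eq_sub hε
    rw [hεvar, hεmean] at this
    simp only [Pi.pow_apply] at this
    linarith
  rw [hsplit, hlogistic, hε2] at heq
  refine logistic_equilibrium_quadratic hk (by linarith)
    (by linarith [hεvar ▸ variance_nonneg ε μ]) hθ ?_
  have hne : k * (k + 1) * θ ^ 2 ≠ 0 := by positivity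
  apply mul_left_cancel₀ hne
  linear_combination heq

/-- Let `k > 0`, `r > 1`, `θ = (r − 1)/(r(1 + k))`, `X ~ Gamma(k, θ)` (rate `1/θ`),
and `ε` square-integrable, independent of `X`, with `E[ε] = 1` and `Var(ε) = v`. If the
variance-equilibrium condition `E[(r·X·(1−X)·ε)²] − (kθ)² = kθ²` holds, then `r` satisfies
`(k + 3)·r² − (4k + 8)·r + (3k + 5 + (v/(v + 1))·(k + 1)²) = 0`. -/
theorem stmt5 {Ω : Type*} {mΩ : MeasurableSpace Ω} (μ : Measure Ω) [IsProbabilityMeasure μ]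
    (k r θ v : ℝ) (hk : 0 < k) (hr : 1 < r) (hθ : θ = (r - 1) / (r * (1 + k)))
    (X ε : Ω → ℝ) (hXm : Measurable X)
    (hX : Measure.map X μ = gammaMeasure k θ⁻¹)
    (hε : MemLp ε 2 μ) (hindep : IndepFun ε X μ)
    (hεmean : ∫ ω, ε ω ∂μ = 1) (hεvar : variance ε μ = v)
    (heq : (∫ ω, (r * X ω * (1 - X ω) * ε ω) ^ 2 ∂μ) - (k * θ) ^ 2 = k * θ ^ 2) :
    (k + 3) * r ^ 2 - (4 * k + 8) * r + (3 * k + 5 + (v / (v + 1)) * (k + 1) ^ 2) = 0 :=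
  stmt5_general (mΩ := mΩ) μ k r θ v hk hr hθ X ε hX hε hindep hεmean hεvar heq
end

section
/- Let k > 0 and v ≥ 0 with v·(k + 2) ≤ 1, and set s = √((1 − v(k + 2))/(v + 1)). Define r₋ = (2k + 4 − (k + 1)·s)/(k + 3) and r₊ = (2k + 4 + (k + 1)·s)/(k + 3). Then 1 ≤ r₋ ≤ r₊ ≤ (3k + 5)/(k + 3) < 3. -/
/-- Let `k > 0` and `v ≥ 0` with `v·(k + 2) ≤ 1`, and set
`s = √((1 − v(k + 2))/(v + 1))`, `rminus = (2k + 4 − (k + 1)s)/(k + 3)` and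
`rplus = (2k + 4 + (k + 1)s)/(k + 3)`. Then `1 ≤ rminus ≤ rplus ≤ (3k + 5)/(k + 3) < 3`. -/
theorem stmt9 (k v : ℝ) (hk : 0 < k) (hv : 0 ≤ v) (hvk : v * (k + 2) ≤ 1)
    (s rminus rplus : ℝ) (hs : s = Real.sqrt ((1 - v * (k + 2)) / (v + 1)))
    (hrminus : rminus = (2 * k + 4 - (k + 1) * s) / (k + 3))
    (hrplus : rplus = (2 * k + 4 + (k + 1) * s) / (k + 3)) :
    1 ≤ rminus ∧ rminus ≤ rplus ∧ rplus ≤ (3 * k + 5) / (k + 3) ∧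
      (3 * k + 5) / (k + 3) < 3 := by
  have hk3 : (0:ℝ) < k + 3 := by linarith
  have hs0 : 0 ≤ s := hs ▸ Real.sqrt_nonneg _
  have hs1 : s ≤ 1 := by
    have h1 : (1 - v * (k + 2)) / (v + 1) ≤ 1 := by
      rw [div_le_one (by linarith)]
      nlinarith [mul_nonneg hv (by linarith : (0:ℝ) ≤ k + 2)]
    calc s = Real.sqrt ((1 - v * (k + 2)) / (v + 1)) := hs
      _ ≤ Real.sqrt 1 := Real.sqrt_le_sqrt h1
      _ = 1 := Real.sqrt_one
  have hk1s : (k + 1) * s ≤ k + 1 :=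
    mul_le_of_le_one_right (by linarith : (0:ℝ) ≤ k + 1) hs1
  have hk1s0 : 0 ≤ (k + 1) * s := mul_nonneg (by linarith) hs0
  refine ⟨?_, ?_, ?_, ?_⟩
  · rw [hrminus, le_div_iff₀ hk3]; nlinarith
  · rw [hrminus, hrplus, div_le_div_iff₀ hk3 hk3]; nlinarith
  · rw [hrplus, div_le_div_iff₀ hk3 hk3]; nlinarith
  · rw [div_lt_iff₀ hk3]; linarith
end

section
/- Let k > 0, θ > 0, r > 0. Let X be a real random variable distributed as Gamma(k, θ), and let ε be an integrable real random variable independent of X with E[ε] = 1. If the mean-equilibrium condition E[X · e^{r(1 − X)} · ε] = kθ holds, then 1 + rθ = e^{r/(k + 1)}; equivalently, θ = (e^{r/(k + 1)} − 1)/r. -/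
open MeasureTheory ProbabilityTheory Real Set

/-!
Independence factors the equilibrium mean as `E[X e^{r(1-X)}] · E[ε]`, and against the Gamma
density `E[X e^{r(1-X)}] = e^r kθ / (1 + rθ)^{k+1}` (a shifted Gamma integral). The condition
therefore says `(1 + rθ)^{k+1} = e^r`.
-/

lemma integral_gammaMeasure_eq_integral_Ioi {a b : ℝ} (ha : 0 < a) (hb : 0 < b) (g : ℝ → ℝ) :
    ∫ x, g x ∂gammaMeasure a b
      = ∫ x in Ioi 0, b ^ a / Gamma a * x ^ (a - 1) * exp (-(b * x)) * g x := by
  have hpdf : gammaPDF a b = fun x ↦ ((gammaPDFReal a b x).toNNReal : ENNReal) := rfl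
  rw [gammaMeasure, hpdf,
    integral_withDensity_eq_integral_smul (measurable_gammaPDFReal a b).real_toNNReal,
    ← setIntegral_eq_integral_of_forall_compl_eq_zero (s := Ici 0), integral_Ici_eq_integral_Ioi]
  · refine setIntegral_congr_fun measurableSet_Ioi fun x (hx : 0 < x) ↦ ?_
    rw [NNReal.smul_def, smul_eq_mul, coe_toNNReal _ (gammaPDFReal_nonneg ha hb x), gammaPDFReal,
      if_pos hx.le]
  · intro x (hx : ¬ 0 ≤ x)
    simp [gammaPDFReal, hx]

lemma integral_mul_exp_neg_mul_gammaMeasure {a b c : ℝ} (ha : 0 < a) (hb : 0 < b)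
    (hbc : 0 < b + c) :
    ∫ x, x * exp (-(c * x)) ∂gammaMeasure a b = a * b ^ a / (b + c) ^ (a + 1) := by
  rw [integral_gammaMeasure_eq_integral_Ioi ha hb]
  have hintegrand : ∀ x ∈ Ioi (0 : ℝ),
      b ^ a / Gamma a * x ^ (a - 1) * exp (-(b * x)) * (x * exp (-(c * x)))
        = b ^ a / Gamma a * (x ^ (a + 1 - 1) * exp (-((b + c) * x))) := by
    intro x (hx : 0 < x)
    rw [add_sub_cancel_right, rpow_sub_one hx.ne', mul_comm c, add_mul, neg_add, exp_add]
    field_simp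
  rw [setIntegral_congr_fun measurableSet_Ioi hintegrand, integral_const_mul,
    integral_rpow_mul_exp_neg_mul_Ioi (by linarith) hbc, Gamma_add_one ha.ne',
    one_div, inv_rpow hbc.le]
  have hΓ : Gamma a ≠ 0 := (Gamma_pos_of_pos ha).ne'
  field_simp

lemma integral_mul_exp_mul_one_sub_gammaMeasure_inv {k θ r : ℝ} (hk : 0 < k) (hθ : 0 < θ)
    (hrθ : 0 < 1 + r * θ) :
    ∫ x, x * exp (r * (1 - x)) ∂gammaMeasure k θ⁻¹
      = exp r * (k * θ) / (1 + r * θ) ^ (k + 1) := by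
  have hθr : θ⁻¹ + r = θ⁻¹ * (1 + r * θ) := by field_simp
  have hsplit : ∀ x : ℝ, x * exp (r * (1 - x)) = exp r * (x * exp (-(r * x))) := by
    intro x
    rw [mul_left_comm, ← exp_add]
    ring_nf
  simp_rw [hsplit]
  rw [integral_const_mul, integral_mul_exp_neg_mul_gammaMeasure hk (inv_pos.2 hθ)
    (by rw [hθr]; positivity), hθr, mul_rpow (inv_pos.2 hθ).le hrθ.le,
    rpow_add (inv_pos.2 hθ), rpow_one]
  have : (0 : ℝ) < θ⁻¹ ^ k := by positivity
  field_simp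

lemma ProbabilityTheory.IndepFun.integral_comp_mul_eq_integral_map_mul {Ω β : Type*} {mΩ : MeasurableSpace Ω}
    {mβ : MeasurableSpace β} {μ : Measure Ω} {ε : Ω → ℝ} {X : Ω → β} (hindep : IndepFun ε X μ)
    (hε : AEStronglyMeasurable ε μ) (hX : Measurable X) {f : β → ℝ} (hf : Measurable f) :
    ∫ ω, f (X ω) * ε ω ∂μ = (∫ x, f x ∂μ.map X) * ∫ ω, ε ω ∂μ := by
  rw [integral_map hX.aemeasurable hf.aestronglyMeasurable]
  exact (hindep.symm.comp hf measurable_id).integral_fun_mul_eq_mul_integral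
    (hf.comp hX).aestronglyMeasurable hε

lemma eq_exp_div_of_rpow_eq_exp {y p s : ℝ} (hy : 0 < y) (hp : p ≠ 0) (h : y ^ p = exp s) :
    y = exp (s / p) := by
  rw [rpow_def_of_pos hy, exp_eq_exp] at h
  rw [← h, mul_div_cancel_right₀ _ hp, exp_log hy]

/-- Let `k, θ, r > 0`, `X ~ Gamma(k, θ)` (rate `1/θ`), and `ε` integrable,
independent of `X`, with `E[ε] = 1`. If the mean-equilibrium condition
`E[X · e^{r(1 − X)} · ε] = kθ` holds, then `1 + rθ = e^{r/(k + 1)}`; equivalently,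
`θ = (e^{r/(k + 1)} − 1)/r`. -/
theorem stmt13 {Ω : Type*} {mΩ : MeasurableSpace Ω} (μ : Measure Ω) [IsProbabilityMeasure μ]
    (k θ r : ℝ) (hk : 0 < k) (hθ : 0 < θ) (hr : 0 < r)
    (X ε : Ω → ℝ) (hXm : Measurable X)
    (hX : Measure.map X μ = gammaMeasure k θ⁻¹)
    (hε : Integrable ε μ) (hindep : IndepFun ε X μ) (hεmean : ∫ ω, ε ω ∂μ = 1)
    (heq : ∫ ω, X ω * Real.exp (r * (1 - X ω)) * ε ω ∂μ = k * θ) :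
    1 + r * θ = Real.exp (r / (k + 1)) ∧ θ = (Real.exp (r / (k + 1)) - 1) / r := by
  have hrθ : 0 < 1 + r * θ := by positivity
  have hricker : Measurable fun x : ℝ ↦ x * exp (r * (1 - x)) := by fun_prop
  rw [hindep.integral_comp_mul_eq_integral_map_mul hε.1 hXm hricker, hX, hεmean, mul_one,
    integral_mul_exp_mul_one_sub_gammaMeasure_inv hk hθ hrθ,
    div_eq_iff (by positivity), mul_comm, mul_right_inj' (by positivity)] at heq
  have hfix : 1 + r * θ = exp (r / (k + 1)) :=
    eq_exp_div_of_rpow_eq_exp hrθ (by positivity) heq.symm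
  refine ⟨hfix, ?_⟩
  rw [← hfix]
  field_simp
  ring
end
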